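/- arXiv:1511.02475 — 2 statements merged into one kernel-verified Lean document; each statement's English description precedes it below -/
import Mathlib

section
/- Let G be a connected simple cubic graph such that the Sylvester graph S_16 admits a G-coloring (i.e., G ≺ S_16). Then G is isomorphic to S_16. -/
open scoped Classical

/-- A finite undirected multigraph (possibly with loops and parallel edges),
given by a vertex type, an edge type, and an endpoints map. -/
structure Multigraph where
  V : Type
  E : Type
  [fintV : Fintype V]
  [fintE : Fintype E]
  [decV : DecidableEq V]
  [decE : DecidableEq E]
  ends : E → Sym2 V

namespace Multigraph

attribute [instance] Multigraph.fintV Multigraph.fintE Multigraph.decV Multigraph.decE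

variable (G : Multigraph)

/-- The number of times `v` occurs as an endpoint of `e` (2 for a loop at `v`). -/
def incCount (v : G.V) (e : G.E) : ℕ :=
  if G.ends e = Sym2.diag v then 2 else if v ∈ G.ends e then 1 else 0

/-- Degree of a vertex (a loop contributes 2). -/
def degree (v : G.V) : ℕ := ∑ e : G.E, G.incCount v e

/-- The set `∂_G(v)` of edges incident to `v`. -/
def star (v : G.V) : Finset G.E := Finset.univ.filter fun e => v ∈ G.ends e

/-- No loops. -/
def Loopless : Prop := ∀ e : G.E, ¬ (G.ends e).IsDiag

/-- A cubic graph: loopless and 3-regular (parallel edges allowed). -/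
def Cubic : Prop := G.Loopless ∧ ∀ v : G.V, G.degree v = 3

/-- A cubic pseudo-graph: 3-regular, loops and parallel edges allowed. -/
def CubicPseudo : Prop := ∀ v : G.V, G.degree v = 3

/-- A simple graph: no loops and no parallel edges. -/
def Simple : Prop := G.Loopless ∧ ∀ e e' : G.E, G.ends e = G.ends e' → e = e'

/-- Two edges are adjacent if they are distinct and share an endpoint. -/
def EdgeAdj (e e' : G.E) : Prop :=
  e ≠ e' ∧ ∃ v : G.V, v ∈ G.ends e ∧ v ∈ G.ends e'

/-- A matching: a set of pairwise non-adjacent edges. -/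
def IsMatching (M : Set G.E) : Prop :=
  ∀ e ∈ M, ∀ e' ∈ M, e ≠ e' → ¬ ∃ v : G.V, v ∈ G.ends e ∧ v ∈ G.ends e'

/-- A perfect matching: a matching covering every vertex. -/
def IsPerfectMatching (M : Set G.E) : Prop :=
  G.IsMatching M ∧ ∀ v : G.V, ∃ e ∈ M, v ∈ G.ends e

/-- Degree of `v` within the spanning subgraph with edge set `A`. -/
noncomputable def degIn (A : Set G.E) (v : G.V) : ℕ :=
  ∑ e : G.E, if e ∈ A then G.incCount v e else 0

/-- `A` is the edge set of a `k`-factor: a spanning `k`-regular subgraph. -/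
def IsKFactor (k : ℕ) (A : Set G.E) : Prop := ∀ v : G.V, G.degIn A v = k

/-- `A` is the edge set of an even subgraph. -/
def EvenSubgraph (A : Set G.E) : Prop := ∀ v : G.V, Even (G.degIn A v)

/-- Reachability using only edges from `A`. -/
def Reach (A : Set G.E) : G.V → G.V → Prop :=
  Relation.ReflTransGen fun a b => ∃ e ∈ A, G.ends e = s(a, b)

/-- Connectedness. -/
def Connected : Prop := ∀ u v : G.V, G.Reach Set.univ u v

/-- A bridge: an edge whose removal disconnects its endpoints. -/
def IsBridge (e : G.E) : Prop :=
  ∀ u w : G.V, G.ends e = s(u, w) → ¬ G.Reach {e' | e' ≠ e} u w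

/-- The chromatic index: least number of colors of a proper edge coloring. -/
noncomputable def chromaticIndex : ℕ :=
  sInf {n | ∃ c : G.E → Fin n, ∀ e e', G.EdgeAdj e e' → c e ≠ c e'}

/-- A triangle on distinct vertices `u, v, w` with edges `e₁, e₂, e₃`. -/
def IsTriangle (e₁ e₂ e₃ : G.E) (u v w : G.V) : Prop :=
  u ≠ v ∧ v ≠ w ∧ u ≠ w ∧
    G.ends e₁ = s(u, v) ∧ G.ends e₂ = s(v, w) ∧ G.ends e₃ = s(u, w)

/-- Triangle-freeness. -/
def TriangleFree : Prop :=
  ¬ ∃ (e₁ e₂ e₃ : G.E) (u v w : G.V), G.IsTriangle e₁ e₂ e₃ u v w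

/-- An isomorphism of multigraphs. -/
structure Iso (G H : Multigraph) where
  vEquiv : G.V ≃ H.V
  eEquiv : G.E ≃ H.E
  ends_map : ∀ e : G.E, H.ends (eEquiv e) = (G.ends e).map vEquiv

/-- `G` and `H` are isomorphic. -/
def IsIsomorphicTo (G H : Multigraph) : Prop := Nonempty (Iso G H)

/-- An `H`-coloring of `G`: `f(∂_G(x)) = ∂_H(y)` for every vertex `x` of `G`,
some vertex `y` of `H`. -/
def IsHColoring (G H : Multigraph) (f : G.E → H.E) : Prop :=
  ∀ x : G.V, ∃ y : H.V, (G.star x).image f = H.star y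

/-- The set `V(f)` of vertices of `G` satisfying the `H`-coloring condition under `f`. -/
def colVerts (G H : Multigraph) (f : G.E → H.E) : Set G.V :=
  {x : G.V | ∃ y : H.V, (G.star x).image f = H.star y}

/-- The incidence multiset of a vertex: each incident edge with its multiplicity
(a loop occurs twice). -/
noncomputable def incMultiset (v : G.V) : Multiset G.E :=
  ∑ e : G.E, (G.incCount v e) • ({e} : Multiset G.E)

end Multigraph

/-- The Petersen graph. -/
def Petersen : Multigraph where
  V := Fin 10
  E := {p : Sym2 (Fin 10) //
    p ∈ ({s(0,1), s(1,2), s(2,3), s(3,4), s(4,0),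
          s(0,5), s(1,6), s(2,7), s(3,8), s(4,9),
          s(5,7), s(7,9), s(9,6), s(6,8), s(8,5)} : Finset (Sym2 (Fin 10)))}
  ends := Subtype.val

/-- The Sylvester graph `S` on 10 vertices: a central vertex 0 joined by three
bridges to three end-blocks; each end-block is a 3-vertex multigraph whose two
non-root vertices are joined by a pair of parallel edges. -/
def SylvesterS : Multigraph where
  V := Fin 10
  E := Fin 15
  ends := ![s(0,1), s(1,2), s(1,3), s(2,3), s(2,3),
            s(0,4), s(4,5), s(4,6), s(5,6), s(5,6),
            s(0,7), s(7,8), s(7,9), s(8,9), s(8,9)]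

/-- The Sylvester simple graph `S₁₆` on 16 vertices: central vertex 0 joined by
bridges to three 5-vertex end-blocks with edges
(v1,v2),(v1,v3),(v1,v4),(v2,v3),(v2,v4),(v3,v5),(v4,v5). -/
def Sylvester16 : Multigraph where
  V := Fin 16
  E := {p : Sym2 (Fin 16) //
    p ∈ ({s(1,2), s(1,3), s(1,4), s(2,3), s(2,4), s(3,5), s(4,5), s(0,5),
          s(6,7), s(6,8), s(6,9), s(7,8), s(7,9), s(8,10), s(9,10), s(0,10),
          s(11,12), s(11,13), s(11,14), s(12,13), s(12,14), s(13,15), s(14,15),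
          s(0,15)} : Finset (Sym2 (Fin 16)))}
  ends := Subtype.val

/-- The graph `S'` on 10 vertices: two 5-vertex blocks, each consisting of a
triangle v1v2v3 together with edges (v1,v4),(v2,v4),(v3,v5),(v4,v5), joined by
a bridge between the two degree-2 vertices. -/
def Sprime : Multigraph where
  V := Fin 10
  E := {p : Sym2 (Fin 10) //
    p ∈ ({s(0,1), s(0,2), s(1,2), s(0,3), s(1,3), s(2,4), s(3,4),
          s(5,6), s(5,7), s(6,7), s(5,8), s(6,8), s(7,9), s(8,9),
          s(4,9)} : Finset (Sym2 (Fin 10)))}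
  ends := Subtype.val

/-- The Sylvester pseudo-graph `S₄` on 4 vertices: a central vertex 0 joined to
vertices 1, 2, 3 (edges `a = 0`, `b = 1`, `c = 2`), each of which carries a loop
(`a' = 3`, `b' = 4`, `c' = 5`). -/
def S4 : Multigraph where
  V := Fin 4
  E := Fin 6
  ends := ![s(0,1), s(0,2), s(0,3), s(1,1), s(2,2), s(3,3)]


/-!
Let `f` be a `G`-colouring of `S₁₆` and `φ` its vertex map. Counting in two ways the pairs
(vertex `x ∈ R`, edge at `x` sent to `h`) gives, for every edge `h = zz'` of `G` and every set `R`
of vertices of `S₁₆`, `|φ⁻¹ z ∩ R| + |φ⁻¹ z' ∩ R| = ∑_{f e = h} |R ∩ e|`.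

For `R` an end-block of `S₁₆` the right-hand side is odd exactly when `h` is the image of the
block's bridge, so the parity of the block's fibre count changes across that edge and nowhere
else: the three edges of `G` at `c = φ 0` are bridges. In a simple cubic graph the far side of a
bridge has an odd number of vertices, at least four, hence at least five. This gives
`|V(G)| ≥ 16`, and it forces the block fibre counts to be even at `c`, since otherwise the `c`-side
of a bridge (at least six vertices) would lie in the image of a 5-vertex block. So `|φ⁻¹ c|` is odd.

For `R = V(S₁₆)` the identity makes the parity of `|φ⁻¹ z|` constant along edges, so by
connectivity every fibre of `φ` is odd, in particular nonempty; with `|V(G)| ≥ 16` this makes `φ`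
bijective, and then every fibre of `f` has exactly one edge.
-/

open Finset

lemma Finset.card_filter_mem_sym2 {α β : Type*} [DecidableEq β] (s : Finset α) (p : α → β)
    {a b : β} (hab : a ≠ b) :
    #{x ∈ s | p x ∈ s(a, b)} = #{x ∈ s | p x = a} + #{x ∈ s | p x = b} := by
  rw [← card_union_of_disjoint (disjoint_filter.2 fun x _ ha hb => hab (ha.symm.trans hb)),
    ← filter_or]
  simp only [Sym2.mem_iff]

namespace Multigraph

variable {G H : Multigraph}

lemma exists_ends_eq (e : G.E) : ∃ a b, G.ends e = s(a, b) :=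
  Sym2.ind (fun a b => ⟨a, b, rfl⟩) (G.ends e)

lemma Loopless.ne_of_ends_eq (hl : G.Loopless) {e : G.E} {a b : G.V}
    (h : G.ends e = s(a, b)) : a ≠ b := by
  rintro rfl
  exact hl e (h ▸ Sym2.mk_isDiag_iff.2 rfl)

lemma mem_star {v : G.V} {e : G.E} : e ∈ G.star v ↔ v ∈ G.ends e := by
  simp [star]

lemma Cubic.card_star (hG : G.Cubic) (v : G.V) : #(G.star v) = 3 := by
  rw [← hG.2 v, degree, star, card_filter]
  refine sum_congr rfl fun e _ => ?_
  have : G.ends e ≠ Sym2.diag v := fun h => hG.1 e (h ▸ Sym2.diag_isDiag v)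
  simp [incCount, this]

lemma Cubic.three_mul_card_eq_sum (hG : G.Cubic) (D : Finset G.V) :
    3 * #D = ∑ e, #{x ∈ D | x ∈ G.ends e} := by
  calc 3 * #D = ∑ x ∈ D, #(G.star x) := by simp [hG.card_star, mul_comm]
    _ = ∑ e, #{x ∈ D | x ∈ G.ends e} :=
      sum_card_bipartiteAbove_eq_sum_card_bipartiteBelow (fun x e => x ∈ G.ends e)

lemma Reach.symm {A : Set G.E} {u v : G.V} (h : G.Reach A u v) : G.Reach A v u := by
  have : Std.Symm fun a b => ∃ e ∈ A, G.ends e = s(a, b) :=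
    ⟨fun _ _ ⟨e, he, hab⟩ => ⟨e, he, hab.trans Sym2.eq_swap⟩⟩
  exact Relation.ReflTransGen.stdSymm.symm _ _ h

lemma Reach.mod_two_eq {A : Set G.E} {P : G.V → ℕ}
    (hP : ∀ e ∈ A, ∀ a b, G.ends e = s(a, b) → P a % 2 = P b % 2) {u v : G.V}
    (h : G.Reach A u v) : P u % 2 = P v % 2 := by
  induction h with
  | refl => rfl
  | tail _ hstep ih =>
    obtain ⟨e, he, hab⟩ := hstep
    exact ih.trans (hP e he _ _ hab)

section Side

noncomputable def side (g : G.E) (w : G.V) : Finset G.V := univ.filter (G.Reach {e | e ≠ g} w)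

variable {g g' : G.E} {c w : G.V}

lemma mem_side {z : G.V} : z ∈ G.side g w ↔ G.Reach {e | e ≠ g} w z := by
  simp [side]

lemma self_mem_side : w ∈ G.side g w := mem_side.2 .refl

lemma isBridge_of_mod_two (P : G.V → ℕ)
    (hP : ∀ e a b, G.ends e = s(a, b) → (P a + P b) % 2 = if e = g then 1 else 0) :
    G.IsBridge g := by
  intro u v hg huv
  have hinv := huv.mod_two_eq (P := P) fun e he a b hab => by
    have := hP e a b hab
    rw [if_neg he] at this
    omega
  have := hP g u v hg
  rw [if_pos rfl] at this
  omega

lemma IsBridge.notMem_side (hg : G.IsBridge g) (h : G.ends g = s(c, w)) : c ∉ G.side g w :=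
  fun hc => hg w c (h.trans Sym2.eq_swap) (mem_side.1 hc)

lemma IsBridge.disjoint_side (hg : G.IsBridge g) (h : G.ends g = s(c, w)) :
    Disjoint (G.side g c) (G.side g w) :=
  disjoint_left.2 fun _ hc hw => hg c w h ((mem_side.1 hc).trans (mem_side.1 hw).symm)

lemma IsBridge.side_subset_side (hg : G.IsBridge g) (h : G.ends g = s(c, w))
    (hc : c ∈ G.ends g') (hne : g ≠ g') : G.side g w ⊆ G.side g' c := by
  intro z hz
  induction (mem_side.1 hz) with
  | refl => exact mem_side.2 (.single ⟨g, hne, h⟩)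
  | @tail a b hwa hstep ih =>
    obtain ⟨e, he, hab⟩ := hstep
    have hb : b ∈ G.side g w := mem_side.2 (hwa.tail ⟨e, he, hab⟩)
    -- both ends of `e` lie on the far side of `g`, which does not contain `c`
    have heg' : e ≠ g' := by
      rintro rfl
      rw [hab, Sym2.mem_iff] at hc
      rcases hc with rfl | rfl
      exacts [hg.notMem_side h (mem_side.2 hwa), hg.notMem_side h hb]
    exact mem_side.2 ((mem_side.1 (ih (mem_side.2 hwa))).tail ⟨e, heg', hab⟩)

lemma Cubic.odd_card_side (hG : G.Cubic) (hg : G.IsBridge g) (h : G.ends g = s(c, w)) :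
    Odd #(G.side g w) := by
  have hcount : ∀ e, #{x ∈ G.side g w | x ∈ G.ends e} % 2 = if e = g then 1 else 0 := by
    intro e
    by_cases he : e = g
    · subst he
      rw [h, card_filter_mem_sym2 _ (fun x => x) (hG.1.ne_of_ends_eq h)]
      simp [filter_eq', self_mem_side, hg.notMem_side h]
    · obtain ⟨a, b, hab⟩ := exists_ends_eq e
      have hside : a ∈ G.side g w ↔ b ∈ G.side g w := by
        simp only [mem_side]
        exact ⟨fun ha => ha.tail ⟨e, he, hab⟩, fun hb => hb.tail ⟨e, he, hab.trans Sym2.eq_swap⟩⟩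
      rw [hab, card_filter_mem_sym2 _ (fun x => x) (hG.1.ne_of_ends_eq hab), if_neg he]
      by_cases ha : a ∈ G.side g w <;> simp [filter_eq', ha, hside.1, ← hside]
  have h3 := hG.three_mul_card_eq_sum (G.side g w)
  rw [Nat.odd_iff]
  have : (∑ e, #{x ∈ G.side g w | x ∈ G.ends e}) % 2 = 1 := by
    rw [sum_nat_mod, sum_congr rfl fun e _ => hcount e, sum_ite_eq']
    simp
  omega

lemma Cubic.four_le_card_side (hG : G.Cubic) (hs : G.Simple) (hg : G.IsBridge g)
    (h : G.ends g = s(c, w)) : 4 ≤ #(G.side g w) := by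
  -- a neighbour `a ≠ c` of `w`, whose three neighbours are distinct and on the far side of `g`
  obtain ⟨e', he', he'g⟩ := exists_mem_ne (by rw [hG.card_star]; omega : 1 < #(G.star w)) g
  obtain ⟨a, hwa⟩ := Sym2.mem_iff_exists.1 (mem_star.1 he')
  have ha : a ∈ G.side g w := mem_side.2 (.single ⟨e', he'g, hwa⟩)
  have hnb : ∀ e ∈ G.star a, ∃ b ∈ (G.side g w).erase a, G.ends e = s(a, b) := by
    intro e he
    obtain ⟨b, hab⟩ := Sym2.mem_iff_exists.1 (mem_star.1 he)
    have heg : e ≠ g := by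
      rintro rfl
      rw [h, Sym2.eq_iff] at hab
      rcases hab with ⟨hca, -⟩ | ⟨-, hwa'⟩
      exacts [hg.notMem_side h (hca ▸ ha), hG.1.ne_of_ends_eq hwa hwa']
    exact ⟨b, mem_erase.2 ⟨(hG.1.ne_of_ends_eq hab).symm, mem_side.2
      ((mem_side.1 ha).tail ⟨e, heg, hab⟩)⟩, hab⟩
  have : Nonempty G.V := ⟨a⟩
  choose! nb hnb_mem hnb_ends using hnb
  have := card_le_card_of_injOn nb (fun e he => hnb_mem e he) fun e he e' he' hee' =>
    hs.2 e e' (by rw [hnb_ends e he, hnb_ends e' he', hee'])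
  rw [hG.card_star, card_erase_of_mem ha] at this
  omega

lemma Cubic.five_le_card_side (hG : G.Cubic) (hs : G.Simple) (hg : G.IsBridge g)
    (h : G.ends g = s(c, w)) : 5 ≤ #(G.side g w) := by
  have h4 := hG.four_le_card_side hs hg h
  have hodd := Nat.odd_iff.1 (hG.odd_card_side hg h)
  omega

lemma Cubic.six_le_card_side (hG : G.Cubic) (hs : G.Simple) (hg' : G.IsBridge g') {w' : G.V}
    (h : G.ends g = s(c, w)) (h' : G.ends g' = s(c, w')) (hne : g' ≠ g) : 6 ≤ #(G.side g c) := by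
  have hsub : insert c (G.side g' w') ⊆ G.side g c :=
    insert_subset self_mem_side (hg'.side_subset_side h' (h ▸ Sym2.mem_mk_left c w) hne)
  have := card_le_card hsub
  rw [card_insert_of_notMem (hg'.notMem_side h')] at this
  have := hG.five_le_card_side hs hg' h'
  omega

lemma Cubic.card_le_of_isBridge {ι : Type*} [Fintype ι] (hG : G.Cubic) (hs : G.Simple)
    {g : ι → G.E} {w : ι → G.V} (hinj : Function.Injective g) (hg : ∀ i, G.IsBridge (g i))
    (h : ∀ i, G.ends (g i) = s(c, w i)) : 1 + 5 * Fintype.card ι ≤ Fintype.card G.V := by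
  classical
  have hdisj : ((univ : Finset ι) : Set ι).PairwiseDisjoint fun i => G.side (g i) (w i) :=
    fun i _ j _ hij => ((hg i).disjoint_side (h i)).symm.mono_right
      ((hg j).side_subset_side (h j) (h i ▸ Sym2.mem_mk_left c (w i)) (hinj.ne hij.symm))
  have hc : c ∉ univ.biUnion fun i => G.side (g i) (w i) := by
    simp only [mem_biUnion, not_exists, not_and]
    exact fun i _ => (hg i).notMem_side (h i)
  calc 1 + 5 * Fintype.card ι ≤ 1 + ∑ i, #(G.side (g i) (w i)) := by
        have := sum_le_sum fun i (_ : i ∈ univ) => hG.five_le_card_side hs (hg i) (h i)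
        simp only [sum_const, card_univ, smul_eq_mul] at this
        omega
    _ = #(insert c (univ.biUnion fun i => G.side (g i) (w i))) := by
        rw [card_insert_of_notMem hc, card_biUnion hdisj, add_comm]
    _ ≤ Fintype.card G.V := card_le_univ _

end Side

section Coloring

variable {f : H.E → G.E} {φ : H.V → G.V}

lemma mem_ends_apply (hφ : ∀ x, (H.star x).image f = G.star (φ x)) {x : H.V} {e : H.E}
    (h : x ∈ H.ends e) : φ x ∈ G.ends (f e) := by
  rw [← mem_star, ← hφ]
  exact mem_image_of_mem f (mem_star.2 h)

lemma injOn_star (hH : H.Cubic) (hG : G.Cubic) (hφ : ∀ x, (H.star x).image f = G.star (φ x))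
    (x : H.V) : Set.InjOn f (H.star x) :=
  injOn_of_card_image_eq (by rw [hφ, hG.card_star, hH.card_star])

lemma card_filter_star_eq (hH : H.Cubic) (hG : G.Cubic)
    (hφ : ∀ x, (H.star x).image f = G.star (φ x)) (x : H.V) (h : G.E) :
    #{e ∈ H.star x | f e = h} = if φ x ∈ G.ends h then 1 else 0 := by
  rw [← card_image_of_injOn ((injOn_star hH hG hφ x).mono (filter_subset _ _)),
    ← filter_image (p := fun y => y = h), hφ, filter_eq']
  split_ifs <;> simp_all [mem_star]

lemma card_fiber_add_card_fiber (hH : H.Cubic) (hG : G.Cubic)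
    (hφ : ∀ x, (H.star x).image f = G.star (φ x)) (R : Finset H.V) {h : G.E} {z z' : G.V}
    (hz : G.ends h = s(z, z')) :
    #{x ∈ R | φ x = z} + #{x ∈ R | φ x = z'} = ∑ e with f e = h, #{x ∈ R | x ∈ H.ends e} := by
  calc #{x ∈ R | φ x = z} + #{x ∈ R | φ x = z'}
      = #{x ∈ R | φ x ∈ G.ends h} := by
        rw [hz, card_filter_mem_sym2 _ _ (hG.1.ne_of_ends_eq hz)]
    _ = ∑ x ∈ R, #{e ∈ H.star x | f e = h} := by
        rw [card_filter]
        exact sum_congr rfl fun x _ => (card_filter_star_eq hH hG hφ x h).symm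
    _ = ∑ e with f e = h, #{x ∈ R | x ∈ H.ends e} := by
        refine (sum_congr rfl fun x _ => congrArg card ?_).trans
          (sum_card_bipartiteAbove_eq_sum_card_bipartiteBelow (fun x e => x ∈ H.ends e))
        ext e
        simp [bipartiteAbove, mem_star, and_comm]

lemma card_fiber_add_card_fiber_univ (hH : H.Cubic) (hG : G.Cubic)
    (hφ : ∀ x, (H.star x).image f = G.star (φ x)) {h : G.E} {z z' : G.V}
    (hz : G.ends h = s(z, z')) :
    #{x | φ x = z} + #{x | φ x = z'} = 2 * #{e | f e = h} := by
  rw [card_fiber_add_card_fiber hH hG hφ univ hz, card_eq_sum_ones, mul_sum, mul_one]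
  refine sum_congr rfl fun e _ => ?_
  obtain ⟨a, b, hab⟩ := exists_ends_eq e
  rw [hab, card_filter_mem_sym2 _ (fun x => x) (hH.1.ne_of_ends_eq hab)]
  simp [filter_eq']

lemma odd_card_fiber (hH : H.Cubic) (hG : G.Cubic) (hconn : G.Connected)
    (hφ : ∀ x, (H.star x).image f = G.star (φ x)) {c : G.V} (hc : Odd #{x | φ x = c})
    (z : G.V) : Odd #{x | φ x = z} := by
  have := (hconn c z).mod_two_eq (P := fun z => #{x | φ x = z}) fun e _ a b hab => by
    have := card_fiber_add_card_fiber_univ hH hG hφ hab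
    omega
  rw [Nat.odd_iff] at hc ⊢
  omega

lemma bijective_of_odd_card_fiber (hH : H.Cubic) (hG : G.Cubic) (hconn : G.Connected)
    (hφ : ∀ x, (H.star x).image f = G.star (φ x)) {c : G.V} (hc : Odd #{x | φ x = c})
    (hcard : Fintype.card H.V ≤ Fintype.card G.V) :
    Function.Bijective φ ∧ Function.Bijective f := by
  have hsurj : Function.Surjective φ := fun z => by
    obtain ⟨x, hx⟩ := card_pos.1 (odd_card_fiber hH hG hconn hφ hc z).pos
    exact ⟨x, (mem_filter.1 hx).2⟩
  have hbij := (Fintype.bijective_iff_surjective_and_card φ).2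
    ⟨hsurj, le_antisymm hcard (Fintype.card_le_of_surjective φ hsurj)⟩
  have hfiber (z : G.V) : #{x | φ x = z} = 1 := by
    obtain ⟨x, rfl⟩ := hsurj z
    exact card_eq_one.2 ⟨x, by ext y; simp [hbij.1.eq_iff]⟩
  refine ⟨hbij, (Function.bijective_iff_existsUnique f).2 fun h => ?_⟩
  obtain ⟨z, z', hz⟩ := exists_ends_eq h
  have := card_fiber_add_card_fiber_univ hH hG hφ hz
  rw [hfiber, hfiber] at this
  obtain ⟨e, he⟩ := card_eq_one.1 (by omega : #{e | f e = h} = 1)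
  exact ⟨e, by simpa using he.ge (mem_singleton_self e),
    fun e' he' => mem_singleton.1 (he ▸ mem_filter.2 ⟨mem_univ e', he'⟩)⟩

lemma ends_apply_eq (hH : H.Loopless) (hφ : ∀ x, (H.star x).image f = G.star (φ x))
    (hinj : Function.Injective φ) (e : H.E) : G.ends (f e) = (H.ends e).map φ := by
  obtain ⟨a, b, hab⟩ := exists_ends_eq e
  have ha := mem_ends_apply hφ (hab ▸ Sym2.mem_mk_left a b)
  have hb := mem_ends_apply hφ (hab ▸ Sym2.mem_mk_right a b)
  rw [hab, Sym2.map_mk, ← Sym2.mem_and_mem_iff (hinj.ne (hH.ne_of_ends_eq hab))]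
  exact ⟨ha, hb⟩

lemma isIsomorphicTo_of_bijective (hH : H.Loopless) (hφ : ∀ x, (H.star x).image f = G.star (φ x))
    (hφb : Function.Bijective φ) (hfb : Function.Bijective f) : G.IsIsomorphicTo H := by
  refine ⟨⟨(Equiv.ofBijective φ hφb).symm, (Equiv.ofBijective f hfb).symm, fun e => ?_⟩⟩
  obtain ⟨e, rfl⟩ := hfb.2 e
  have hφ' : ⇑(Equiv.ofBijective φ hφb).symm ∘ φ = id :=
    funext (Equiv.ofBijective φ hφb).symm_apply_apply
  rw [ends_apply_eq hH hφ hφb.1, Sym2.map_map, hφ', Sym2.map_id, id,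
    show (Equiv.ofBijective f hfb).symm (f e) = e from (Equiv.ofBijective f hfb).symm_apply_apply e]

end Coloring

end Multigraph

namespace Sylvester16

open Multigraph

def block : Fin 3 → Finset Sylvester16.V :=
  ![({1, 2, 3, 4, 5} : Finset (Fin 16)), ({6, 7, 8, 9, 10} : Finset (Fin 16)),
    ({11, 12, 13, 14, 15} : Finset (Fin 16))]

def center : Sylvester16.V := (0 : Fin 16)

def bridge : Fin 3 → Sylvester16.E :=
  ![⟨s(0, 5), by decide⟩, ⟨s(0, 10), by decide⟩, ⟨s(0, 15), by decide⟩]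

lemma cubic : Sylvester16.Cubic := by
  refine ⟨?_, ?_⟩
  · unfold Loopless
    decide
  · unfold degree incCount
    decide

lemma center_mem_ends_bridge : ∀ i, center ∈ Sylvester16.ends (bridge i) := by
  decide

lemma bridge_injective : Function.Injective bridge := by
  decide

lemma card_block : ∀ i, #(block i) = 5 := by
  decide

lemma card_block_filter_mem_ends_mod_two :
    ∀ i e, #{x ∈ block i | x ∈ Sylvester16.ends e} % 2 = if e = bridge i then 1 else 0 := by
  decide

lemma univ_eq_insert_biUnion_block :
    (univ : Finset Sylvester16.V) = insert center (univ.biUnion block) := by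
  decide

lemma center_notMem_biUnion_block : center ∉ univ.biUnion block := by
  decide

lemma pairwiseDisjoint_block :
    ((univ : Finset (Fin 3)) : Set (Fin 3)).PairwiseDisjoint block := by
  intro i _ j _ hij
  revert i j
  decide

variable {G : Multigraph} {f : Sylvester16.E → G.E} {φ : Sylvester16.V → G.V}

lemma card_fiber_block_add_mod_two (hG : G.Cubic)
    (hφ : ∀ x, (Sylvester16.star x).image f = G.star (φ x)) (i : Fin 3) {h : G.E} {a b : G.V}
    (hab : G.ends h = s(a, b)) :
    (#{x ∈ block i | φ x = a} + #{x ∈ block i | φ x = b}) % 2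
      = if h = f (bridge i) then 1 else 0 := by
  rw [card_fiber_add_card_fiber cubic hG hφ _ hab, sum_nat_mod,
    sum_congr rfl fun e _ => card_block_filter_mem_ends_mod_two i e, sum_ite_eq']
  rcases eq_or_ne h (f (bridge i)) with rfl | hi
  · simp
  · simp [hi, hi.symm]

lemma isBridge_apply_bridge (hG : G.Cubic)
    (hφ : ∀ x, (Sylvester16.star x).image f = G.star (φ x)) (i : Fin 3) :
    G.IsBridge (f (bridge i)) :=
  isBridge_of_mod_two _ fun _ _ _ => card_fiber_block_add_mod_two hG hφ i

lemma exists_ends_apply_bridge_eq (hφ : ∀ x, (Sylvester16.star x).image f = G.star (φ x))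
    (i : Fin 3) : ∃ w, G.ends (f (bridge i)) = s(φ center, w) :=
  Sym2.mem_iff_exists.1 (mem_ends_apply hφ (center_mem_ends_bridge i))

lemma injective_apply_bridge (hG : G.Cubic)
    (hφ : ∀ x, (Sylvester16.star x).image f = G.star (φ x)) : Function.Injective (f ∘ bridge) :=
  fun i j hij => bridge_injective (injOn_star cubic hG hφ center
    (mem_star.2 (center_mem_ends_bridge i)) (mem_star.2 (center_mem_ends_bridge j)) hij)

lemma card_fiber_block_center_mod_two (hG : G.Cubic) (hs : G.Simple)
    (hφ : ∀ x, (Sylvester16.star x).image f = G.star (φ x)) (i : Fin 3) :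
    #{x ∈ block i | φ x = φ center} % 2 = 0 := by
  by_contra hodd
  obtain ⟨j, hji⟩ := exists_ne i
  obtain ⟨w, hw⟩ := exists_ends_apply_bridge_eq hφ i
  obtain ⟨w', hw'⟩ := exists_ends_apply_bridge_eq hφ j
  -- the fibre count of block `i` would be odd, hence nonzero, on the whole `φ center`-side
  have hsub : G.side (f (bridge i)) (φ center) ⊆ (block i).image φ := by
    intro z hz
    have hpar := (mem_side.1 hz).mod_two_eq (P := fun z => #{x ∈ block i | φ x = z})
      fun e he a b hab => by
        have := card_fiber_block_add_mod_two hG hφ i hab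
        rw [if_neg he] at this
        omega
    obtain ⟨x, hx⟩ := card_pos.1 (by omega : 0 < #{x ∈ block i | φ x = z})
    exact mem_image.2 ⟨x, (mem_filter.1 hx).1, (mem_filter.1 hx).2⟩
  have h6 := hG.six_le_card_side hs (isBridge_apply_bridge hG hφ j) hw hw'
    ((injective_apply_bridge hG hφ).ne hji)
  have := (card_le_card hsub).trans card_image_le
  rw [card_block] at this
  omega

lemma odd_card_fiber_center (hG : G.Cubic) (hs : G.Simple)
    (hφ : ∀ x, (Sylvester16.star x).image f = G.star (φ x)) : Odd #{x | φ x = φ center} := by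
  have hsplit : #{x | φ x = φ center} = ∑ i, #{x ∈ block i | φ x = φ center} + 1 := by
    rw [univ_eq_insert_biUnion_block, filter_insert, if_pos rfl,
      card_insert_of_notMem fun h => center_notMem_biUnion_block (mem_filter.1 h).1,
      filter_biUnion, card_biUnion (pairwiseDisjoint_block.mono_on fun _ _ => filter_subset _ _)]
  rw [Nat.odd_iff, hsplit, Nat.add_mod, sum_nat_mod,
    sum_congr rfl fun i _ => card_fiber_block_center_mod_two hG hs hφ i]
  simp

lemma sixteen_le_card (hG : G.Cubic) (hs : G.Simple)
    (hφ : ∀ x, (Sylvester16.star x).image f = G.star (φ x)) : 16 ≤ Fintype.card G.V := by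
  choose w hw using exists_ends_apply_bridge_eq hφ
  simpa using hG.card_le_of_isBridge hs (injective_apply_bridge hG hφ)
    (isBridge_apply_bridge hG hφ) hw

end Sylvester16

/-- if G is a connected simple cubic graph and S₁₆ admits a
G-coloring (G ≺ S₁₆), then G = S₁₆. -/
theorem sylvester16_gcoloring_implies_iso (G : Multigraph) (hconn : G.Connected)
    (hs : G.Simple) (hc : G.Cubic)
    (hcol : ∃ f : Sylvester16.E → G.E, Multigraph.IsHColoring Sylvester16 G f) :
    Multigraph.IsIsomorphicTo G Sylvester16 := by
  obtain ⟨f, hf⟩ := hcol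
  choose φ hφ using hf
  obtain ⟨hφb, hfb⟩ := Multigraph.bijective_of_odd_card_fiber Sylvester16.cubic hc hconn hφ
    (Sylvester16.odd_card_fiber_center hc hs hφ) (Sylvester16.sixteen_le_card hc hs hφ)
  exact Multigraph.isIsomorphicTo_of_bijective Sylvester16.cubic.1 hφ hφb hfb
end

section
/- Let G be a graph of maximum degree at most 3, and let c be a partial proper edge-coloring of G with colors {1,2,3} minimizing the number of uncolored edges. Then the uncolored edges form a matching, and the odd cycles corresponding to distinct uncolored edges (each uncolored edge e=(u,v) determines a maximal α–β Kempe alternating path from u which terminates at v, forming with e an odd cycle C_e) are pairwise vertex-disjoint. -/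
open scoped Classical

namespace Multigraph

variable (G : Multigraph)

/-- A proper partial edge coloring with colors {1,2,3} (`none` = uncolored):
adjacent colored edges receive different colors. -/
def ProperPartial (c : G.E → Option (Fin 3)) : Prop :=
  ∀ e e', G.EdgeAdj e e' → ∀ a : Fin 3, c e = some a → c e' ≠ some a

/-- The uncolored edges of a partial coloring. -/
def uncolored (c : G.E → Option (Fin 3)) : Set G.E := {e | c e = none}

/-- A cycle of length `n ≥ 3`, given by `n`-periodic vertex and edge sequences
(vertices pairwise distinct within a period). -/
def IsCycleSeq (n : ℕ) (p : ℕ → G.V) (q : ℕ → G.E) : Prop :=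
  3 ≤ n ∧ (∀ i j, i < n → j < n → p i = p j → i = j) ∧
    (∀ i, p (i + n) = p i) ∧ (∀ i, q (i + n) = q i) ∧
    ∀ i, G.ends (q i) = s(p i, p (i + 1))

/-- The odd cycle `C_e` corresponding to an uncolored edge `e = q 0`: the other
edges form a maximal α–β Kempe alternating path from `p 1` terminating at
`p 0` (β missing at the start vertex, α missing at the end vertex). -/
def IsKempeCycle (c : G.E → Option (Fin 3)) (e : G.E) (n : ℕ)
    (p : ℕ → G.V) (q : ℕ → G.E) (α β : Fin 3) : Prop :=
  G.IsCycleSeq n p q ∧ Odd n ∧ q 0 = e ∧ c e = none ∧ α ≠ β ∧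
    (∀ i, 1 ≤ i → i < n → c (q i) = some (if i % 2 = 1 then α else β)) ∧
    (∀ g : G.E, p 1 ∈ G.ends g → c g ≠ some β) ∧
    (∀ g : G.E, p 0 ∈ G.ends g → c g ≠ some α)

end Multigraph

/-!
If uncoloured edges `vu` and `vw` met at `v`, two colours would be free at `v`. By minimality no
colour is free at both ends of an uncoloured edge, so the third colour `β` is free at `u` and at
`w` but not at `v`. For a colour `γ` free at `v`, a Kempe change on the `γ`–`β` chain from `u`
(or from `w`) that avoided `v` would free `γ` at both ends of an uncoloured edge; so `u`, `v`, `w`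
are three vertices of degree at most one in one component of the `γ`–`β` subgraph. That subgraph
has maximum degree two, and counting edges shows that a connected graph of maximum degree two has
at most two such vertices.

Recolouring the hole of a Kempe cycle `C_e` with the colour of the next edge and uncolouring that
edge moves the hole along `C_e` without changing the number of uncoloured edges. Hence, by the
matching property, no other uncoloured edge touches `C_e`. If `C_{e₂}` met `C_{e₁}`, moving the
hole of `C_{e₂}` up to its first vertex on `C_{e₁}` leaves `C_{e₁}` a Kempe cycle touched by an
uncoloured edge.
-/

open Finset in
theorem SimpleGraph.not_reachable_three_of_degree_le_one {V : Type*} [Fintype V]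
    (H : SimpleGraph V) (hdeg : ∀ x, H.degree x ≤ 2) {a b d : V}
    (hab : a ≠ b) (had : a ≠ d) (hbd : b ≠ d)
    (ha : H.degree a ≤ 1) (hb : H.degree b ≤ 1) (hd : H.degree d ≤ 1) :
    ¬ (H.Reachable a b ∧ H.Reachable a d) := by
  rintro ⟨hab', had'⟩
  set C := H.connectedComponentMk a
  have hbC : b ∈ C := (SimpleGraph.ConnectedComponent.eq.mpr hab').symm
  have hdC : d ∈ C := (SimpleGraph.ConnectedComponent.eq.mpr had').symm
  have hdegC : ∀ x : C, C.toSimpleGraph.degree x ≤ H.degree x := fun x =>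
    card_le_card_of_injOn Subtype.val
      (fun y hy => by simp only [mem_coe, SimpleGraph.mem_neighborFinset] at hy ⊢; exact hy)
      Subtype.val_injective.injOn
  -- the degrees in the component sum to at most `2 |C| - 3`, yet `|C| ≤ |E| + 1`
  let L : Finset C := {⟨a, rfl⟩, ⟨b, hbC⟩, ⟨d, hdC⟩}
  have hL : #L = 3 := by
    simp only [L]
    rw [card_insert_of_notMem (by simp [Subtype.ext_iff, hab, had]),
      card_pair (by simp [Subtype.ext_iff, hbd])]
  have hsum : ∑ x : C, (C.toSimpleGraph.degree x + if x ∈ L then 1 else 0) ≤ ∑ _x : C, 2 := by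
    refine sum_le_sum fun x _ => ?_
    split_ifs with hx
    · simp only [L, mem_insert, mem_singleton] at hx
      rcases hx with rfl | rfl | rfl <;>
        linarith [hdegC ⟨a, rfl⟩, hdegC ⟨b, hbC⟩, hdegC ⟨d, hdC⟩]
    · linarith [hdegC x, hdeg x]
  rw [sum_add_distrib, SimpleGraph.sum_degrees_eq_twice_card_edges, sum_boole,
    filter_mem_eq_inter, univ_inter, hL, sum_const, card_univ, smul_eq_mul] at hsum
  have hconn := C.connected_toSimpleGraph.card_vert_le_card_edgeSet_add_one
  rw [Nat.card_eq_fintype_card, Nat.card_eq_fintype_card, ← SimpleGraph.edgeFinset_card] at hconn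
  omega

theorem Function.Periodic.exists_first_pos {α : Type*} {f : ℕ → α} {n : ℕ}
    (hf : Function.Periodic f n) (hn : 0 < n) {P : α → Prop} {j : ℕ} (hj : P (f j)) :
    ∃ k, 1 ≤ k ∧ k ≤ n ∧ P (f k) ∧ ∀ l, 1 ≤ l → l < k → ¬ P (f l) := by
  have hex : ∃ k, 1 ≤ k ∧ P (f k) := ⟨j + n, by omega, (hf j).symm ▸ hj⟩
  obtain ⟨hk1, hk⟩ := Nat.find_spec hex
  refine ⟨Nat.find hex, hk1, ?_, hk, fun l h1 h2 hl => Nat.find_min hex h2 ⟨h1, hl⟩⟩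
  by_contra hkn
  refine Nat.find_min hex (m := Nat.find hex - n) (by omega) ⟨by omega, ?_⟩
  rwa [← hf, Nat.sub_add_cancel (by omega)]

namespace Multigraph

open Finset Function

variable (G : Multigraph)

def Misses (c : G.E → Option (Fin 3)) (x : G.V) (a : Fin 3) : Prop :=
  ∀ g, x ∈ G.ends g → c g ≠ some a

def IsMinimalColoring (c : G.E → Option (Fin 3)) : Prop :=
  G.ProperPartial c ∧
    ∀ c', G.ProperPartial c' → (G.uncolored c).ncard ≤ (G.uncolored c').ncard

variable {G} {c : G.E → Option (Fin 3)}

theorem card_star_le_degree (x : G.V) : #(G.star x) ≤ G.degree x := by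
  rw [card_eq_sum_ones, degree]
  calc ∑ e ∈ G.star x, 1 ≤ ∑ e ∈ G.star x, G.incCount x e :=
        sum_le_sum fun e he => by
          have hx : x ∈ G.ends e := (mem_filter.mp he).2
          unfold incCount; split_ifs <;> simp_all
    _ ≤ ∑ e, G.incCount x e := sum_le_sum_of_subset (subset_univ _)

theorem EdgeAdj.symm {e e' : G.E} (h : G.EdgeAdj e e') : G.EdgeAdj e' e :=
  ⟨h.1.symm, h.2.imp fun _ hv => ⟨hv.2, hv.1⟩⟩

theorem Misses.update {x : G.V} {a : Fin 3} (h : G.Misses c x a) {g : G.E}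
    {o : Option (Fin 3)} (ho : x ∈ G.ends g → o ≠ some a) : G.Misses (update c g o) x a := by
  intro g' hg'
  by_cases hgg : g' = g
  · subst hgg; rw [update_self]; exact ho hg'
  · rw [update_of_ne hgg]; exact h g' hg'

theorem uncolored_update_none (g : G.E) :
    G.uncolored (update c g none) = insert g (G.uncolored c) := by
  ext g'
  by_cases hgg : g' = g
  · subst hgg; simp [uncolored]
  · simp [uncolored, hgg]

theorem uncolored_update_some (g : G.E) (a : Fin 3) :
    G.uncolored (update c g (some a)) = G.uncolored c \ {g} := by
  ext g'
  by_cases hgg : g' = g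
  · subst hgg; simp [uncolored]
  · simp [uncolored, hgg]

namespace ProperPartial

variable (hc : G.ProperPartial c)
include hc

theorem eq_of_eq_some {x : G.V} {g g' : G.E} {a : Fin 3} (hg : x ∈ G.ends g)
    (hg' : x ∈ G.ends g') (ha : c g = some a) (ha' : c g' = some a) : g = g' := by
  by_contra hne
  exact hc g g' ⟨hne, x, hg, hg'⟩ a ha ha'

theorem misses_update_none {x : G.V} {g : G.E} {a : Fin 3} (hg : x ∈ G.ends g)
    (ha : c g = some a) : G.Misses (update c g none) x a := by
  intro g' hg' ha'
  by_cases hgg : g' = g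
  · subst hgg; simp at ha'
  · rw [update_of_ne hgg] at ha'
    exact hgg (hc.eq_of_eq_some hg' hg ha' ha)

theorem update_none (g : G.E) : G.ProperPartial (update c g none) := by
  intro e e' hadj a he he'
  by_cases h : e = g
  · subst h; simp at he
  by_cases h' : e' = g
  · subst h'; simp at he'
  rw [update_of_ne h] at he
  rw [update_of_ne h'] at he'
  exact hc e e' hadj a he he'

theorem update_some {g : G.E} {x y : G.V} {a : Fin 3} (hxy : G.ends g = s(x, y))
    (hx : G.Misses c x a) (hy : G.Misses c y a) : G.ProperPartial (update c g (some a)) := by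
  have hfree : ∀ e', G.EdgeAdj g e' → c e' ≠ some a := by
    rintro e' ⟨-, z, hz, hz'⟩
    rw [hxy, Sym2.mem_iff] at hz
    rcases hz with rfl | rfl
    exacts [hx e' hz', hy e' hz']
  intro e e' hadj b he he'
  by_cases h : e = g
  · subst h
    rw [update_self, Option.some_inj] at he
    subst he
    rw [update_of_ne hadj.1.symm] at he'
    exact hfree e' hadj he'
  by_cases h' : e' = g
  · subst h'
    rw [update_self, Option.some_inj] at he'
    subst he'
    rw [update_of_ne h] at he
    exact hfree e hadj.symm he
  rw [update_of_ne h] at he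
  rw [update_of_ne h'] at he'
  exact hc e e' hadj b he he'

end ProperPartial

theorem card_uncolored_at_le_card_misses {x : G.V} (hdeg : G.degree x ≤ 3) :
    #((G.star x).filter fun g => c g = none) ≤ #(univ.filter (G.Misses c x)) := by
  have hpresent : univ.filter (fun a => ¬ G.Misses c x a) ⊆
      ((G.star x).filter fun g => ¬ c g = none).image fun g => (c g).getD 0 := by
    intro a ha
    simp only [Misses, mem_filter, mem_univ, true_and, not_forall, not_not] at ha
    obtain ⟨g, hg, hga⟩ := ha
    exact mem_image.mpr ⟨g, by simp [star, hg, hga], by simp [hga]⟩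
  have h3 := card_filter_add_card_filter_not (s := univ) (G.Misses c x)
  have hstar := card_filter_add_card_filter_not (s := G.star x) fun g => c g = none
  rw [card_univ, Fintype.card_fin] at h3
  have := (card_le_card hpresent).trans card_image_le
  have := card_star_le_degree (G := G) x
  omega

theorem exists_misses {x : G.V} (hdeg : G.degree x ≤ 3) {e : G.E} (hx : x ∈ G.ends e)
    (he : c e = none) : ∃ a, G.Misses c x a := by
  have hpos : 0 < #((G.star x).filter fun g => c g = none) :=
    card_pos.mpr ⟨e, by simp [star, hx, he]⟩
  obtain ⟨a, ha⟩ := card_pos.mp (hpos.trans_le (card_uncolored_at_le_card_misses hdeg))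
  exact ⟨a, (mem_filter.mp ha).2⟩

theorem exists_two_misses {x : G.V} (hdeg : G.degree x ≤ 3) {e f : G.E} (hef : e ≠ f)
    (hxe : x ∈ G.ends e) (hxf : x ∈ G.ends f) (he : c e = none) (hf : c f = none) :
    ∃ a b, a ≠ b ∧ G.Misses c x a ∧ G.Misses c x b := by
  have htwo : 1 < #((G.star x).filter fun g => c g = none) := by
    refine one_lt_card.mpr ⟨e, ?_, f, ?_, hef⟩ <;> simp [star, *]
  obtain ⟨a, ha, b, hb, hab⟩ :=
    one_lt_card.mp (htwo.trans_le (card_uncolored_at_le_card_misses hdeg))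
  exact ⟨a, b, hab, (mem_filter.mp ha).2, (mem_filter.mp hb).2⟩

namespace IsMinimalColoring

variable (hc : G.IsMinimalColoring c)
include hc

theorem of_ncard_eq {c' : G.E → Option (Fin 3)} (hc' : G.ProperPartial c')
    (h : (G.uncolored c').ncard = (G.uncolored c).ncard) : G.IsMinimalColoring c' :=
  ⟨hc', fun c'' hc'' => h ▸ hc.2 c'' hc''⟩

theorem not_misses_of_misses {e : G.E} (he : c e = none) {x y : G.V}
    (hxy : G.ends e = s(x, y)) {a : Fin 3} (hx : G.Misses c x a) : ¬ G.Misses c y a := by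
  intro hy
  have hlt := Set.ncard_sdiff_singleton_lt_of_mem (show e ∈ G.uncolored c from he)
  rw [← uncolored_update_some e a] at hlt
  exact hlt.not_ge (hc.2 _ (hc.1.update_some hxy hx hy))

end IsMinimalColoring

variable (G) in
def kempeGraph (c : G.E → Option (Fin 3)) (a b : Fin 3) : SimpleGraph G.V where
  Adj x y := x ≠ y ∧ ∃ g, (c g = some a ∨ c g = some b) ∧ G.ends g = s(x, y)
  symm := ⟨fun _ _ ⟨hne, g, hg, hxy⟩ => ⟨hne.symm, g, hg, hxy.trans Sym2.eq_swap⟩⟩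
  loopless := ⟨fun _ h => h.1 rfl⟩

theorem kempeGraph_comm (a b : Fin 3) : G.kempeGraph c a b = G.kempeGraph c b a := by
  ext x y
  simp only [kempeGraph, or_comm]

theorem ProperPartial.eq_of_kempeGraph {x y y' : G.V} {a : Fin 3} (hc : G.ProperPartial c)
    (hy : ∃ g, c g = some a ∧ G.ends g = s(x, y))
    (hy' : ∃ g, c g = some a ∧ G.ends g = s(x, y')) : y = y' := by
  obtain ⟨g, hg, hxy⟩ := hy
  obtain ⟨g', hg', hxy'⟩ := hy'
  have hgg : g = g' := hc.eq_of_eq_some (x := x) (by simp [hxy]) (by simp [hxy']) hg hg'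
  rw [hgg, hxy'] at hxy
  exact (Sym2.congr_right.mp hxy).symm

theorem ProperPartial.kempeGraph_degree_le_two (hc : G.ProperPartial c) (a b : Fin 3)
    (x : G.V) : (G.kempeGraph c a b).degree x ≤ 2 := by
  let viaA : G.V → Bool := fun y => decide (∃ g, c g = some a ∧ G.ends g = s(x, y))
  refine (Finset.card_le_card_of_injOn viaA (fun _ _ => Finset.mem_univ _) ?_).trans
    (by simp)
  intro y hy y' hy' hyy
  simp only [Finset.mem_coe, SimpleGraph.mem_neighborFinset] at hy hy'
  obtain ⟨-, g, hg, hxy⟩ := hy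
  obtain ⟨-, g', hg', hxy'⟩ := hy'
  by_cases hA : ∃ g, c g = some a ∧ G.ends g = s(x, y)
  · have hA' : ∃ g, c g = some a ∧ G.ends g = s(x, y') := by
      simpa [viaA, hA] using hyy.symm
    exact hc.eq_of_kempeGraph hA hA'
  · have hA' : ¬ ∃ g, c g = some a ∧ G.ends g = s(x, y') := by
      simpa [viaA, hA] using hyy.symm
    refine hc.eq_of_kempeGraph (a := b) ⟨g, ?_, hxy⟩ ⟨g', ?_, hxy'⟩
    · exact hg.resolve_left fun h => hA ⟨g, h, hxy⟩
    · exact hg'.resolve_left fun h => hA' ⟨g', h, hxy'⟩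

theorem ProperPartial.kempeGraph_degree_le_one (hc : G.ProperPartial c) {a b : Fin 3}
    {x : G.V} (hx : G.Misses c x b) : (G.kempeGraph c a b).degree x ≤ 1 := by
  have hviaA : ∀ y, (G.kempeGraph c a b).Adj x y → ∃ g, c g = some a ∧ G.ends g = s(x, y) :=
    fun y ⟨_, g, hg, hxy⟩ => ⟨g, hg.resolve_right (hx g (by simp [hxy])), hxy⟩
  refine Finset.card_le_one.mpr fun y hy y' hy' => hc.eq_of_kempeGraph (hviaA y ?_) (hviaA y' ?_)
  · simpa using hy
  · simpa using hy'

variable (G) in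
/-- For `S` closed in `kempeGraph c a b`, swapping `a` and `b` on all edges meeting `S` recolours
exactly the `a`–`b` chains through `S`: the third colour is fixed by the swap. -/
noncomputable def kempeSwap (c : G.E → Option (Fin 3)) (a b : Fin 3) (S : Set G.V) :
    G.E → Option (Fin 3) :=
  fun g => if ∃ x ∈ G.ends g, x ∈ S then (c g).map (Equiv.swap a b) else c g

section kempeSwap

variable {a b : Fin 3} {S : Set G.V}

theorem kempeSwap_apply_of_mem {x : G.V} (hx : x ∈ S) {g : G.E} (hg : x ∈ G.ends g) :
    G.kempeSwap c a b S g = (c g).map (Equiv.swap a b) :=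
  if_pos ⟨x, hg, hx⟩

theorem kempeSwap_apply_of_notMem (hS : ∀ x y, (G.kempeGraph c a b).Adj x y → x ∈ S → y ∈ S)
    {y : G.V} (hy : y ∉ S) {g : G.E} (hg : y ∈ G.ends g) : G.kempeSwap c a b S g = c g := by
  unfold kempeSwap
  split_ifs with hmeet
  · obtain ⟨x, hx, hxS⟩ := hmeet
    have hxy : x ≠ y := fun h => hy (h ▸ hxS)
    have hends : G.ends g = s(x, y) := (Sym2.mem_and_mem_iff hxy).mp ⟨hx, hg⟩
    match hcg : c g with
    | none => rfl
    | some d =>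
      have hda : d ≠ a := fun h => hy (hS x y ⟨hxy, g, Or.inl (h ▸ hcg), hends⟩ hxS)
      have hdb : d ≠ b := fun h => hy (hS x y ⟨hxy, g, Or.inr (h ▸ hcg), hends⟩ hxS)
      simp [Equiv.swap_apply_of_ne_of_ne hda hdb]
  · rfl

theorem ProperPartial.kempeSwap (hc : G.ProperPartial c)
    (hS : ∀ x y, (G.kempeGraph c a b).Adj x y → x ∈ S → y ∈ S) :
    G.ProperPartial (G.kempeSwap c a b S) := by
  rintro e e' ⟨hne, z, hz, hz'⟩ d he he'
  by_cases hzS : z ∈ S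
  · rw [kempeSwap_apply_of_mem hzS hz, Option.map_eq_some_iff] at he
    rw [kempeSwap_apply_of_mem hzS hz', Option.map_eq_some_iff] at he'
    obtain ⟨d₁, hd₁, rfl⟩ := he
    obtain ⟨d₂, hd₂, hd⟩ := he'
    rw [(Equiv.swap a b).injective hd] at hd₂
    exact hc e e' ⟨hne, z, hz, hz'⟩ d₁ hd₁ hd₂
  · rw [kempeSwap_apply_of_notMem hS hzS hz] at he
    rw [kempeSwap_apply_of_notMem hS hzS hz'] at he'
    exact hc e e' ⟨hne, z, hz, hz'⟩ d he he'

theorem uncolored_kempeSwap : G.uncolored (G.kempeSwap c a b S) = G.uncolored c := by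
  ext g
  change G.kempeSwap c a b S g = none ↔ c g = none
  unfold kempeSwap
  split_ifs <;> simp

theorem Misses.kempeSwap_of_mem {x : G.V} (hx : x ∈ S) (h : G.Misses c x b) :
    G.Misses (G.kempeSwap c a b S) x a := by
  intro g hg hga
  rw [kempeSwap_apply_of_mem hx hg, Option.map_eq_some_iff] at hga
  obtain ⟨d, hd, hda⟩ := hga
  rw [Equiv.swap_apply_eq_iff, Equiv.swap_apply_left] at hda
  exact h g hg (hda ▸ hd)

theorem Misses.kempeSwap_of_notMem (hS : ∀ x y, (G.kempeGraph c a b).Adj x y → x ∈ S → y ∈ S)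
    {y : G.V} (hy : y ∉ S) (h : G.Misses c y a) : G.Misses (G.kempeSwap c a b S) y a :=
  fun g hg => kempeSwap_apply_of_notMem hS hy hg ▸ h g hg

end kempeSwap

theorem IsMinimalColoring.kempeGraph_reachable (hc : G.IsMinimalColoring c) {e : G.E}
    (he : c e = none) {x y : G.V} (hxy : G.ends e = s(x, y)) {a b : Fin 3}
    (hx : G.Misses c x b) (hy : G.Misses c y a) : (G.kempeGraph c a b).Reachable x y := by
  by_contra hxy'
  set S := {z | (G.kempeGraph c a b).Reachable x z}
  have hS : ∀ z z', (G.kempeGraph c a b).Adj z z' → z ∈ S → z' ∈ S :=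
    fun _ _ hadj hz => hz.trans hadj.reachable
  have hc' : G.IsMinimalColoring (G.kempeSwap c a b S) :=
    hc.of_ncard_eq (hc.1.kempeSwap hS) (by rw [uncolored_kempeSwap])
  have he' : G.kempeSwap c a b S e = none := by
    change e ∈ G.uncolored _
    rw [uncolored_kempeSwap]
    exact he
  exact hc'.not_misses_of_misses he' hxy (hx.kempeSwap_of_mem (SimpleGraph.Reachable.refl x))
    (hy.kempeSwap_of_notMem hS hxy')

theorem IsMinimalColoring.isMatching (hl : G.Loopless) (hdeg : ∀ v : G.V, G.degree v ≤ 3)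
    (hc : G.IsMinimalColoring c) : G.IsMatching (G.uncolored c) := by
  rintro e (he : c e = none) f (hf : c f = none) hef ⟨v, hve, hvf⟩
  set u := Sym2.Mem.other' hve
  set w := Sym2.Mem.other' hvf
  have hvu : G.ends e = s(v, u) := (Sym2.other_spec' hve).symm
  have hvw : G.ends f = s(v, w) := (Sym2.other_spec' hvf).symm
  have huv : u ≠ v := fun h => hl e (by rw [hvu, h]; exact Sym2.mk_isDiag_iff.mpr rfl)
  have hwv : w ≠ v := fun h => hl f (by rw [hvw, h]; exact Sym2.mk_isDiag_iff.mpr rfl)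
  have hue : u ∈ G.ends e := by simp [hvu]
  have hwf : w ∈ G.ends f := by simp [hvw]
  obtain ⟨γ, γ', hγγ', hγ, hγ'⟩ := exists_two_misses (hdeg v) hef hve hvf he hf
  by_cases huw : u = w
  · obtain ⟨δ, δ', hδδ', hδ, hδ'⟩ :=
      exists_two_misses (hdeg u) hef hue (huw ▸ hwf) he hf
    have hshared : ∀ a b c d : Fin 3, a ≠ b → c ≠ d → c = a ∨ c = b ∨ d = a ∨ d = b := by decide
    rcases hshared γ γ' δ δ' hγγ' hδδ' with rfl | rfl | rfl | rfl
    exacts [hc.not_misses_of_misses he hvu hγ hδ, hc.not_misses_of_misses he hvu hγ' hδ,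
      hc.not_misses_of_misses he hvu hγ hδ', hc.not_misses_of_misses he hvu hγ' hδ']
  · obtain ⟨β, hβ⟩ := exists_misses (hdeg u) hue he
    obtain ⟨β', hβ'⟩ := exists_misses (hdeg w) hwf hf
    have hβγ : β ≠ γ := fun h => hc.not_misses_of_misses he hvu hγ (h ▸ hβ)
    have hβγ' : β ≠ γ' := fun h => hc.not_misses_of_misses he hvu hγ' (h ▸ hβ)
    have hβ'γ : β' ≠ γ := fun h => hc.not_misses_of_misses hf hvw hγ (h ▸ hβ')
    have hβ'γ' : β' ≠ γ' := fun h => hc.not_misses_of_misses hf hvw hγ' (h ▸ hβ')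
    have hthird : ∀ a b c d : Fin 3, a ≠ b → c ≠ a → c ≠ b → d ≠ a → d ≠ b → d = c := by decide
    obtain rfl := hthird γ γ' β' β hγγ' hβ'γ hβ'γ' hβγ hβγ'
    have hreach_u := hc.kempeGraph_reachable he (hvu.trans Sym2.eq_swap) hβ hγ
    have hreach_w := hc.kempeGraph_reachable hf (hvw.trans Sym2.eq_swap) hβ' hγ
    refine SimpleGraph.not_reachable_three_of_degree_le_one _
      (hc.1.kempeGraph_degree_le_two γ β) huv huw hwv.symm
      (hc.1.kempeGraph_degree_le_one hβ) ?_ (hc.1.kempeGraph_degree_le_one hβ')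
      ⟨hreach_u, hreach_u.trans hreach_w.symm⟩
    rw [kempeGraph_comm]
    exact hc.1.kempeGraph_degree_le_one hγ

variable (G) in
/-- The hole `q 0` and the next `m` edges of a Kempe cycle. `misses_next` is not asked for when
`m = 0`: it fails once the hole has been moved round to the last edge of the cycle. -/
structure IsKempePath (c : G.E → Option (Fin 3)) (p : ℕ → G.V) (q : ℕ → G.E) (α β : Fin 3)
    (m : ℕ) : Prop where
  ends_eq : ∀ i, G.ends (q i) = s(p i, p (i + 1))
  injOn : ∀ i j, i ≤ m → j ≤ m → p i = p j → i = j
  hole : c (q 0) = none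
  ne : α ≠ β
  misses_start : G.Misses c (p 0) α
  misses_next : 1 ≤ m → G.Misses c (p 1) β
  color : ∀ i, 1 ≤ i → i ≤ m → c (q i) = some (if i % 2 = 1 then α else β)

namespace IsKempePath

variable {p : ℕ → G.V} {q : ℕ → G.E} {α β : Fin 3} {m : ℕ}

theorem color_one (h : G.IsKempePath c p q α β (m + 1)) : c (q 1) = some α :=
  h.color 1 le_rfl (by omega)

theorem proper_shift (h : G.IsKempePath c p q α β (m + 1)) (hc : G.ProperPartial c) :
    G.ProperPartial (update (update c (q 1) none) (q 0) (some α)) := by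
  refine (hc.update_none (q 1)).update_some (h.ends_eq 0) ?_
    (hc.misses_update_none (by simp [h.ends_eq 1]) h.color_one)
  exact h.misses_start.update fun _ => by simp

theorem shift (h : G.IsKempePath c p q α β (m + 1)) (hc : G.ProperPartial c) :
    G.IsKempePath (update (update c (q 1) none) (q 0) (some α)) (fun i => p (i + 1))
      (fun i => q (i + 1)) β α m where
  ends_eq i := h.ends_eq (i + 1)
  injOn i j hi hj hij := by have := h.injOn (i + 1) (j + 1) (by omega) (by omega) hij; omega
  hole := by
    have hq : q 1 ≠ q 0 := fun h' => by simpa [h', h.hole] using h.color_one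
    simp [hq]
  ne := h.ne.symm
  misses_start := by
    refine (Misses.update ?_ fun _ => by simp).update fun _ => by simpa using h.ne
    exact h.misses_next (by omega)
  misses_next hm := by
    refine (hc.misses_update_none (by simp [h.ends_eq 1]) h.color_one).update fun hp => ?_
    rw [h.ends_eq 0, Sym2.mem_iff] at hp
    rcases hp with hp | hp
    · exact absurd (h.injOn 2 0 (by omega) (by omega) hp) (by omega)
    · exact absurd (h.injOn 2 1 (by omega) (by omega) hp) (by omega)
  color i hi1 him := by
    have hcol := h.color (i + 1) (by omega) (by omega)
    have hne0 : q (i + 1) ≠ q 0 := fun h' => by simp [h', h.hole] at hcol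
    have hne1 : q (i + 1) ≠ q 1 := fun h' => by
      have hp : p (i + 1) ∈ G.ends (q 1) := by simp [← h', h.ends_eq (i + 1)]
      rw [h.ends_eq 1, Sym2.mem_iff] at hp
      rcases hp with hp | hp
      · exact absurd (h.injOn _ _ (by omega) (by omega) hp) (by omega)
      · obtain rfl : i = 1 := by have := h.injOn _ _ (by omega) (by omega) hp; omega
        rw [h', h.color_one] at hcol
        exact h.ne (by simpa using hcol)
    simp only [update_of_ne hne0, update_of_ne hne1, hcol]
    split_ifs <;> first | rfl | omega

theorem ncard_uncolored_shift (h : G.IsKempePath c p q α β (m + 1)) :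
    (G.uncolored (update (update c (q 1) none) (q 0) (some α))).ncard =
      (G.uncolored c).ncard := by
  have hq0 : q 0 ∈ G.uncolored c := h.hole
  have hq1 : q 1 ∉ G.uncolored c := by simp [uncolored, h.color_one]
  rw [uncolored_update_some, uncolored_update_none,
    Set.ncard_sdiff_singleton_of_mem (Set.mem_insert_of_mem _ hq0),
    Set.ncard_insert_of_notMem hq1, Nat.add_sub_cancel]

theorem exists_rotation (h : G.IsKempePath c p q α β m) (hc : G.ProperPartial c) :
    ∃ c', G.ProperPartial c' ∧ c' (q m) = none ∧
      (G.uncolored c').ncard = (G.uncolored c).ncard ∧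
      ∀ g, (∀ i ≤ m, g ≠ q i) → c' g = c g := by
  induction m generalizing c p q α β with
  | zero => exact ⟨c, hc, h.hole, rfl, fun _ _ => rfl⟩
  | succ m ih =>
    obtain ⟨c', hc', hhole, hcard, hagree⟩ := ih (h.shift hc) (h.proper_shift hc)
    refine ⟨c', hc', hhole, hcard.trans h.ncard_uncolored_shift, fun g hg => ?_⟩
    rw [hagree g fun i hi => hg (i + 1) (by omega), update_of_ne (hg 0 (by omega)),
      update_of_ne (hg 1 (by omega))]

end IsKempePath

namespace IsKempeCycle

variable {e : G.E} {n : ℕ} {p : ℕ → G.V} {q : ℕ → G.E} {α β : Fin 3}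

theorem isKempePath (h : G.IsKempeCycle c e n p q α β) {m : ℕ} (hm : m < n) :
    G.IsKempePath c p q α β m := by
  obtain ⟨⟨-, hinj, -, -, hends⟩, -, hq0, he, hne, hcol, hmiss1, hmiss0⟩ := h
  exact { ends_eq := hends
          injOn := fun i j hi hj => hinj i j (by omega) (by omega)
          hole := hq0 ▸ he
          ne := hne
          misses_start := hmiss0
          misses_next := fun _ => hmiss1
          color := fun i hi him => hcol i hi (by omega) }

theorem q_ne (h : G.IsKempeCycle c e n p q α β) {f : G.E} (hf : c f = none) (hfe : f ≠ e)
    (i : ℕ) : q i ≠ f := by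
  obtain ⟨⟨h3, -, -, hqper, -⟩, -, hq0, -, -, hcol, -, -⟩ := h
  rw [← (show Function.Periodic q n from hqper).map_mod_nat i]
  intro hqf
  rcases Nat.eq_zero_or_pos (i % n) with h0 | hpos
  · exact hfe (hq0 ▸ h0 ▸ hqf).symm
  · simpa [hqf, hf] using hcol (i % n) hpos (Nat.mod_lt _ (by omega))

theorem of_agree (h : G.IsKempeCycle c e n p q α β) {c' : G.E → Option (Fin 3)}
    (hagree : ∀ g, (∃ i, p i ∈ G.ends g) → c' g = c g ∨ c' g = none ∧ ∀ i, q i ≠ g) :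
    G.IsKempeCycle c' e n p q α β := by
  obtain ⟨hcyc, hodd, hq0, he, hne, hcol, hmiss1, hmiss0⟩ := h
  have hq : ∀ i, c' (q i) = c (q i) := fun i =>
    (hagree (q i) ⟨i, by simp [hcyc.2.2.2.2 i]⟩).resolve_right fun h => h.2 i rfl
  have hmiss : ∀ i a, G.Misses c (p i) a → G.Misses c' (p i) a := fun i a hm g hg hga =>
    (hagree g ⟨i, hg⟩).elim (fun h => hm g hg (h ▸ hga)) fun h => by simp [h.1] at hga
  exact ⟨hcyc, hodd, hq0, hq0 ▸ (hq 0).trans (hq0 ▸ he), hne,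
    fun i h1 h2 => (hq i).trans (hcol i h1 h2), hmiss 1 β hmiss1, hmiss 0 α hmiss0⟩

theorem of_agree_off_path (h : G.IsKempeCycle c e n p q α β) {c' : G.E → Option (Fin 3)}
    {p' : ℕ → G.V} {q' : ℕ → G.E} (hends' : ∀ l, G.ends (q' l) = s(p' l, p' (l + 1))) {m : ℕ}
    (hoff : ∀ l ≤ m, ∀ i, p i ≠ p' l) (hhole : c' (q' m) = none)
    (hagree : ∀ g, (∀ l ≤ m, g ≠ q' l) → c' g = c g) : G.IsKempeCycle c' e n p q α β := by
  refine h.of_agree fun g ⟨a, ha⟩ => ?_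
  by_cases hg : ∀ l ≤ m, g ≠ q' l
  · exact Or.inl (hagree g hg)
  push Not at hg
  obtain ⟨l, hlm, rfl⟩ := hg
  rcases hlm.lt_or_eq with hlm | rfl
  · rw [hends' l, Sym2.mem_iff] at ha
    rcases ha with ha | ha
    exacts [absurd ha (hoff l hlm.le a), absurd ha (hoff (l + 1) hlm a)]
  · refine Or.inr ⟨hhole, fun i hi => ?_⟩
    have hp : p' l ∈ G.ends (q i) := by rw [hi, hends']; exact Sym2.mem_mk_left _ _
    rw [h.1.2.2.2.2 i, Sym2.mem_iff] at hp
    rcases hp with hp | hp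
    exacts [hoff l le_rfl i hp.symm, hoff l le_rfl (i + 1) hp.symm]

end IsKempeCycle

namespace IsMinimalColoring

variable (hl : G.Loopless) (hdeg : ∀ v : G.V, G.degree v ≤ 3) (hc : G.IsMinimalColoring c)
include hl hdeg hc

theorem notMem_ends_of_isKempeCycle {e : G.E} {n : ℕ} {p : ℕ → G.V} {q : ℕ → G.E}
    {α β : Fin 3} (h : G.IsKempeCycle c e n p q α β) {f : G.E} (hf : c f = none)
    (hfe : f ≠ e) (i : ℕ) : p i ∉ G.ends f := by
  intro hpf
  have hn : 0 < n := by have := h.1.1; omega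
  have hpk : p (i % n) = p i := (show Function.Periodic p n from h.1.2.2.1).map_mod_nat i
  obtain ⟨c', hc', hhole, hcard, hagree⟩ :=
    (h.isKempePath (Nat.mod_lt i hn)).exists_rotation hc.1
  have hc'f : c' f = none := (hagree f fun j _ => (h.q_ne hf hfe j).symm).trans hf
  exact (hc.of_ncard_eq hc' hcard).isMatching hl hdeg (q (i % n)) hhole f hc'f
    (h.q_ne hf hfe _) ⟨p (i % n), by simp [h.1.2.2.2.2 (i % n)], hpk ▸ hpf⟩

theorem isKempeCycle_disjoint {e₁ e₂ : G.E} (he₁ : c e₁ = none) (he₂ : c e₂ = none)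
    (hne : e₁ ≠ e₂) {n₁ : ℕ} {p₁ : ℕ → G.V} {q₁ : ℕ → G.E} {α₁ β₁ : Fin 3}
    {n₂ : ℕ} {p₂ : ℕ → G.V} {q₂ : ℕ → G.E} {α₂ β₂ : Fin 3}
    (h₁ : G.IsKempeCycle c e₁ n₁ p₁ q₁ α₁ β₁) (h₂ : G.IsKempeCycle c e₂ n₂ p₂ q₂ α₂ β₂)
    (i j : ℕ) : p₁ i ≠ p₂ j := by
  intro hij
  have hn₂ : 3 ≤ n₂ := h₂.1.1
  have hper₂ : Function.Periodic p₂ n₂ := h₂.1.2.2.1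
  have hends₂ : ∀ l, G.ends (q₂ l) = s(p₂ l, p₂ (l + 1)) := h₂.1.2.2.2.2
  obtain ⟨k, hk1, hkn, ⟨a, ha⟩, hfirst⟩ :=
    Function.Periodic.exists_first_pos hper₂ (by omega) (P := fun v => ∃ a, p₁ a = v) ⟨i, hij⟩
  have hoff : ∀ l ≤ k - 1, ∀ a, p₁ a ≠ p₂ l := by
    rintro (_ | l) hlk a' ha'
    · refine notMem_ends_of_isKempeCycle hl hdeg hc h₁ he₂ hne.symm a' ?_
      rw [ha', ← h₂.2.2.1, hends₂]
      exact Sym2.mem_mk_left _ _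
    · exact hfirst (l + 1) (by omega) (by omega) ⟨a', ha'⟩
  obtain ⟨c', hc', hhole, hcard, hagree⟩ :=
    (h₂.isKempePath (show k - 1 < n₂ by omega)).exists_rotation hc.1
  refine notMem_ends_of_isKempeCycle hl hdeg (hc.of_ncard_eq hc' hcard)
    (h₁.of_agree_off_path hends₂ hoff hhole hagree) hhole (h₂.q_ne he₁ hne (k - 1)) a ?_
  rw [hends₂, Nat.sub_add_cancel hk1, ha]
  exact Sym2.mem_mk_right _ _

end IsMinimalColoring

end Multigraph

/-- in a graph of maximum degree at most 3 with a partial proper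
3-edge-coloring minimizing the number of uncolored edges, the uncolored edges
form a matching and the odd Kempe cycles corresponding to distinct uncolored
edges are pairwise vertex-disjoint. -/
theorem minimal_partial_coloring_matching_and_disjoint_cycles (G : Multigraph)
    (hl : G.Loopless) (hdeg : ∀ v : G.V, G.degree v ≤ 3)
    (c : G.E → Option (Fin 3)) (hc : G.ProperPartial c)
    (hmin : ∀ c' : G.E → Option (Fin 3), G.ProperPartial c' →
      (G.uncolored c).ncard ≤ (G.uncolored c').ncard) :
    G.IsMatching (G.uncolored c) ∧
    ∀ e₁ e₂ : G.E, e₁ ∈ G.uncolored c → e₂ ∈ G.uncolored c → e₁ ≠ e₂ →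
      ∀ (n₁ : ℕ) (p₁ : ℕ → G.V) (q₁ : ℕ → G.E) (α₁ β₁ : Fin 3)
        (n₂ : ℕ) (p₂ : ℕ → G.V) (q₂ : ℕ → G.E) (α₂ β₂ : Fin 3),
        G.IsKempeCycle c e₁ n₁ p₁ q₁ α₁ β₁ →
        G.IsKempeCycle c e₂ n₂ p₂ q₂ α₂ β₂ →
        ∀ i j : ℕ, p₁ i ≠ p₂ j := by
  have hcmin : G.IsMinimalColoring c := ⟨hc, hmin⟩
  exact ⟨hcmin.isMatching hl hdeg, fun e₁ e₂ he₁ he₂ hne _ _ _ _ _ _ _ _ _ _ h₁ h₂ =>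
    hcmin.isKempeCycle_disjoint hl hdeg he₁ he₂ hne h₁ h₂⟩
end
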